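/- Let v,w ∈ L. For all x ∈ E and t ∈ [0, t*(x)): L(v,w)(φ(x,t)) = e^{αt + Λ(x,t)} [ min( inf_{s≥t} J(v,w)(x,s), Kw(x) ) − F(x,t) − Iw(x,t) ]. -/

import Mathlib

open MeasureTheory Filter Set

/-- The class **L** of functions continuous along the flow, with Lipschitz constants. -/
structure IsInL {d : ℕ} (E : Set (EuclideanSpace ℝ (Fin d)))
    (φ : EuclideanSpace ℝ (Fin d) → ℝ → EuclideanSpace ℝ (Fin d))
    (tstar : EuclideanSpace ℝ (Fin d) → ℝ)
    (w : EuclideanSpace ℝ (Fin d) → ℝ) (Cw Lw1 Lw2 Lws : ℝ) : Prop where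
  bdd : ∀ x ∈ E, |w x| ≤ Cw
  cont : ∀ x ∈ E, ContinuousOn (fun t => w (φ x t)) (Set.Ico 0 (tstar x))
  lim : ∀ x ∈ E, Filter.Tendsto (fun t => w (φ x t))
    (nhdsWithin (tstar x) (Set.Iio (tstar x))) (nhds (w (φ x (tstar x))))
  lip1 : ∀ x ∈ E, ∀ y ∈ E, ∀ u ∈ Set.Icc (0:ℝ) (min (tstar x) (tstar y)),
    |w (φ x u) - w (φ y u)| ≤ Lw1 * ‖x - y‖
  lip2 : ∀ x ∈ E, ∀ t ∈ Set.Icc (0:ℝ) (tstar x), ∀ s ∈ Set.Icc (0:ℝ) (tstar x),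
    |w (φ x t) - w (φ x s)| ≤ Lw2 * |t - s|
  lipstar : ∀ x ∈ E, ∀ y ∈ E,
    |w (φ x (tstar x)) - w (φ y (tstar y))| ≤ Lws * ‖x - y‖

/-! Put `y = φ x t`. By the group law the trajectory of `y` is that of `x` shifted by `t`, so
`t*(y) = t*(x) - t`, `Λ(y, s) = Λ(x, t + s) - Λ(x, t)`, and each discounted integral along `y` up to
time `s` is `e^{αt + Λ(x,t)}` times the one along `x` over `[t, t + s]`. Hence
`J(v,w)(y, s) = e^{αt + Λ(x,t)} (J(v,w)(x, t + s) - F(x,t) - Iw(x,t))`, and likewise for `Kw(y)`.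
The infimum over `s ≥ 0` commutes with this increasing affine map because `J(v,w)(x, ·)` is
bounded, all the data being bounded. -/

theorem intervalIntegrable_of_abs_le_on_Ioo {g : ℝ → ℝ} {a b C : ℝ} (hab : a ≤ b)
    (hm : AEStronglyMeasurable g (volume.restrict (Ioo a b))) (hC : ∀ u ∈ Ioo a b, |g u| ≤ C) :
    IntervalIntegrable g volume a b :=
  (intervalIntegrable_iff_integrableOn_Ioo_of_le hab).2 <| Integrable.of_bound hm C <|
    (ae_restrict_iff' measurableSet_Ioo).2 (ae_of_all _ fun u hu => (hC u hu : ‖g u‖ ≤ C))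

theorem integral_comp_add_right_eq_sub {g : ℝ → ℝ} {t u : ℝ}
    (ht : IntervalIntegrable g volume 0 t) (hut : IntervalIntegrable g volume 0 (u + t)) :
    ∫ r in (0:ℝ)..u, g (r + t) = (∫ r in (0:ℝ)..(u + t), g r) - ∫ r in (0:ℝ)..t, g r := by
  rw [intervalIntegral.integral_comp_add_right, zero_add,
    intervalIntegral.integral_interval_sub_left hut ht]

theorem abs_integral_le_of_measure_eq_one {Ω : Type*} [MeasurableSpace Ω] {μ : Measure Ω}
    [IsProbabilityMeasure μ] {s : Set Ω} (hs : MeasurableSet s) (hμs : μ s = 1) {g : Ω → ℝ}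
    {C : ℝ} (hg : ∀ z ∈ s, |g z| ≤ C) : |∫ z, g z ∂μ| ≤ C := by
  have hae : ∀ᵐ z ∂μ, z ∈ s := mem_ae_iff.2 ((prob_compl_eq_zero_iff hs).2 hμs)
  have hbound : ∀ᵐ z ∂μ, ‖g z‖ ≤ C := hae.mono fun z hz => (Real.norm_eq_abs _).trans_le (hg z hz)
  simpa using norm_integral_le_of_norm_le_const hbound

theorem continuousOn_of_abs_sub_le {Y : Type*} [SeminormedAddCommGroup Y] {s : Set Y} {g : Y → ℝ}
    {K : ℝ} (h : ∀ z ∈ s, ∀ z' ∈ s, |g z - g z'| ≤ K * ‖z - z'‖) : ContinuousOn g s :=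
  (LipschitzOnWith.of_dist_le' fun z hz z' hz' => by
    rw [Real.dist_eq, dist_eq_norm]
    exact h z hz z' hz').continuousOn

theorem min_csInf_image_Ici_affine {g h : ℝ → ℝ} {t c D b : ℝ} (hc : 0 < c)
    (hbdd : BddBelow (h '' Ici t)) (hgh : ∀ s, 0 ≤ s → g s = c * (h (t + s) - D)) :
    min (sInf (g '' Ici 0)) (c * (b - D)) = c * (min (sInf (h '' Ici t)) b - D) := by
  have himage : g '' Ici 0 = (fun r => c * (r - D)) '' (h '' Ici t) := by
    ext r
    simp only [mem_image, mem_Ici, exists_exists_and_eq_and]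
    constructor
    · rintro ⟨s, hs, rfl⟩
      exact ⟨t + s, by linarith, (hgh s hs).symm⟩
    · rintro ⟨s, hs, rfl⟩
      exact ⟨s - t, by linarith, by rw [hgh _ (by linarith), add_sub_cancel]⟩
  have hmono : Monotone fun r => c * (r - D) := fun _ _ hab =>
    mul_le_mul_of_nonneg_left (sub_le_sub_right hab D) hc.le
  rw [himage, ← hmono.map_csInf_of_continuousAt (by fun_prop) (nonempty_Ici.image h) hbdd,
    ← mul_min_of_nonneg _ _ hc.le, min_sub_sub_right]

section Flow

variable {X : Type*} {φ : X → ℝ → X}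

theorem flow_zero (hinj : Function.Injective fun x => φ x 0)
    (hφ : ∀ x s t, φ x (t + s) = φ (φ x s) t) (x : X) : φ x 0 = x :=
  hinj (by simpa using (hφ x 0 0).symm)

theorem sInf_hitting_flow {B : Set X} (hφ : ∀ x s t, φ x (t + s) = φ (φ x s) t) {x : X} {t : ℝ}
    (ht : 0 ≤ t) (htx : t < sInf {u | 0 < u ∧ φ x u ∈ B}) :
    sInf {u | 0 < u ∧ φ (φ x t) u ∈ B} = sInf {u | 0 < u ∧ φ x u ∈ B} - t := by
  set S := {u | 0 < u ∧ φ x u ∈ B}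
  have hne : S.Nonempty := by
    by_contra h
    rw [Set.not_nonempty_iff_eq_empty.1 h, Real.sInf_empty] at htx
    linarith
  have hbdd : BddBelow S := ⟨0, fun u hu => hu.1.le⟩
  have hshift : {u | 0 < u ∧ φ (φ x t) u ∈ B} = OrderIso.addRight (-t) '' S := by
    ext u
    constructor
    · rintro ⟨hu, hB⟩
      exact ⟨u + t, ⟨by linarith, by rwa [hφ]⟩, by simp⟩
    · rintro ⟨v, hv, rfl⟩
      have htv : t < v := htx.trans_le (csInf_le hbdd hv)
      refine ⟨by simp only [OrderIso.addRight_apply]; linarith, ?_⟩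
      simpa [← hφ] using hv.2
  rw [hshift, ← OrderIso.map_csInf' _ hne hbdd, OrderIso.addRight_apply, sub_eq_add_neg]

variable [TopologicalSpace X] {E : Set X} {tstar : X → ℝ}

theorem exitTime_nonneg (htstar : ∀ x ∈ E, tstar x = sInf {t | 0 < t ∧ φ x t ∈ frontier E})
    {x : X} (hx : x ∈ E) : 0 ≤ tstar x :=
  htstar x hx ▸ Real.sInf_nonneg fun _ hu => hu.1.le

theorem flow_mem_of_lt_exitTime (hE : IsOpen E)
    (htstar : ∀ x ∈ E, tstar x = sInf {t | 0 < t ∧ φ x t ∈ frontier E}) {x : X} (hx : x ∈ E)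
    (hφ₀ : φ x 0 = x) (hφx : Continuous (φ x)) {u : ℝ} (hu : u ∈ Ico 0 (tstar x)) : φ x u ∈ E := by
  have hpath : IsPreconnected (φ x '' Icc 0 u) := isPreconnected_Icc.image _ hφx.continuousOn
  refine hpath.subset_of_closure_inter_subset hE ⟨x, ⟨0, ⟨le_rfl, hu.1⟩, hφ₀⟩, hx⟩ ?_
    ⟨u, ⟨hu.1, le_rfl⟩, rfl⟩
  rintro _ ⟨hcl, r, hr, rfl⟩
  by_contra hrE
  have hr₀ : 0 < r := hr.1.lt_of_ne (by rintro rfl; exact hrE (by rwa [hφ₀]))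
  have hle : tstar x ≤ r := htstar x hx ▸
    csInf_le ⟨0, fun r hr => hr.1.le⟩ ⟨hr₀, hE.frontier_eq ▸ ⟨hcl, hrE⟩⟩
  linarith [hr.2, hu.2]

theorem exitTime_flow (hE : IsOpen E)
    (htstar : ∀ x ∈ E, tstar x = sInf {t | 0 < t ∧ φ x t ∈ frontier E})
    (hφ : ∀ x s t, φ x (t + s) = φ (φ x s) t) {x : X} (hx : x ∈ E) (hφ₀ : φ x 0 = x)
    (hφx : Continuous (φ x)) {t : ℝ} (ht : 0 ≤ t) (htx : t < tstar x) :
    tstar (φ x t) = tstar x - t := by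
  rw [htstar _ (flow_mem_of_lt_exitTime hE htstar hx hφ₀ hφx ⟨ht, htx⟩), htstar x hx]
  exact sInf_hitting_flow hφ ht (htstar x hx ▸ htx)

end Flow

section Hazard

variable {X : Type*} {φ : X → ℝ → X} {lam : X → ℝ} {Lam : X → ℝ → ℝ}

theorem Lam_flow (hLam : ∀ x t, Lam x t = ∫ s in (0:ℝ)..t, lam (φ x s))
    (hφ : ∀ x s t, φ x (t + s) = φ (φ x s) t) {x : X}
    (hint : ∀ a b, IntervalIntegrable (fun s => lam (φ x s)) volume a b) (t u : ℝ) :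
    Lam (φ x t) u = Lam x (u + t) - Lam x t := by
  simp only [hLam, ← hφ]
  exact integral_comp_add_right_eq_sub (hint 0 t) (hint 0 (u + t))

theorem continuous_Lam (hLam : ∀ x t, Lam x t = ∫ s in (0:ℝ)..t, lam (φ x s)) {x : X}
    (hint : ∀ a b, IntervalIntegrable (fun s => lam (φ x s)) volume a b) : Continuous (Lam x) := by
  simpa only [← hLam] using intervalIntegral.continuous_primitive hint 0

theorem Lam_nonneg (hLam : ∀ x t, Lam x t = ∫ s in (0:ℝ)..t, lam (φ x s)) (hlam : ∀ z, 0 ≤ lam z)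
    (x : X) {u : ℝ} (hu : 0 ≤ u) : 0 ≤ Lam x u :=
  hLam x u ▸ intervalIntegral.integral_nonneg hu fun _ _ => hlam _

end Hazard

section Discounting

variable {X : Type*} (φ : X → ℝ → X) (Lam : X → ℝ → ℝ) (α : ℝ)

noncomputable def discountedIntegrand (g : X → ℝ) (x : X) (s : ℝ) : ℝ :=
  Real.exp (-(α * s) - Lam x s) * g (φ x s)

noncomputable def discountedCost (g : X → ℝ) (x : X) (T : ℝ) : ℝ :=
  ∫ s in (0:ℝ)..T, discountedIntegrand φ Lam α g x s

variable {φ Lam α}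

theorem abs_discount_mul_le (hα : 0 ≤ α) {x : X} {u a C : ℝ} (hu : 0 ≤ u) (hLam : 0 ≤ Lam x u)
    (ha : |a| ≤ C) : |Real.exp (-(α * u) - Lam x u) * a| ≤ C := by
  have hexp : Real.exp (-(α * u) - Lam x u) ≤ 1 :=
    Real.exp_le_one_iff.2 (by nlinarith)
  rw [abs_mul, Real.abs_exp]
  exact (mul_le_of_le_one_left (abs_nonneg a) hexp).trans ha

theorem discount_flow {x : X} {t u : ℝ} (hLam : Lam (φ x t) u = Lam x (u + t) - Lam x t) :
    Real.exp (-(α * u) - Lam (φ x t) u) =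
      Real.exp (α * t + Lam x t) * Real.exp (-(α * (u + t)) - Lam x (u + t)) := by
  rw [← Real.exp_add, hLam]
  ring_nf

theorem intervalIntegrable_discountedIntegrand (hα : 0 ≤ α) {x : X}
    (hLam_cont : Continuous (Lam x)) (hLam_nonneg : ∀ u, 0 ≤ u → 0 ≤ Lam x u) {g : X → ℝ}
    {T C : ℝ} (hm : AEStronglyMeasurable (fun s => g (φ x s)) (volume.restrict (Ioo 0 T)))
    (hg : ∀ u ∈ Ioo 0 T, |g (φ x u)| ≤ C) :
    ∀ b ∈ Icc 0 T, IntervalIntegrable (discountedIntegrand φ Lam α g x) volume 0 b := by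
  intro b hb
  have hsub : Ioo 0 b ⊆ Ioo 0 T := Ioo_subset_Ioo_right hb.2
  refine intervalIntegrable_of_abs_le_on_Ioo hb.1 ?_ fun u hu =>
    abs_discount_mul_le hα hu.1.le (hLam_nonneg u hu.1.le) (hg u (hsub hu))
  exact (Real.continuous_exp.comp ((continuous_const.mul continuous_id).neg.sub
    hLam_cont)).aestronglyMeasurable.mul (hm.mono_set hsub)

theorem abs_discountedCost_le (hα : 0 ≤ α) {x : X} (hLam_nonneg : ∀ u, 0 ≤ u → 0 ≤ Lam x u)
    {g : X → ℝ} {b C : ℝ} (hb : 0 ≤ b) (hg : ∀ u ∈ Ioc 0 b, |g (φ x u)| ≤ C) :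
    |discountedCost φ Lam α g x b| ≤ C * b := by
  have := intervalIntegral.norm_integral_le_of_norm_le_const (a := 0) (b := b)
    (f := discountedIntegrand φ Lam α g x) fun u hu => by
      rw [uIoc_of_le hb] at hu
      exact abs_discount_mul_le hα hu.1.le (hLam_nonneg u hu.1.le) (hg u hu)
  rwa [sub_zero, abs_of_nonneg hb] at this

theorem discountedCost_flow (hφ : ∀ x s t, φ x (t + s) = φ (φ x s) t) {g : X → ℝ} {x : X} {t m : ℝ}
    (hLam : ∀ u, Lam (φ x t) u = Lam x (u + t) - Lam x t)
    (ht : IntervalIntegrable (discountedIntegrand φ Lam α g x) volume 0 t)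
    (hmt : IntervalIntegrable (discountedIntegrand φ Lam α g x) volume 0 (m + t)) :
    discountedCost φ Lam α g (φ x t) m = Real.exp (α * t + Lam x t) *
      (discountedCost φ Lam α g x (m + t) - discountedCost φ Lam α g x t) := by
  have hshift : ∀ u, discountedIntegrand φ Lam α g (φ x t) u =
      Real.exp (α * t + Lam x t) * discountedIntegrand φ Lam α g x (u + t) := fun u => by
    rw [discountedIntegrand, discountedIntegrand, discount_flow (hLam u), hφ, mul_assoc]
  simp only [discountedCost, hshift, intervalIntegral.integral_const_mul,
    integral_comp_add_right_eq_sub ht hmt]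

end Discounting

theorem IsInL.abs_le_of_mem_Icc {d : ℕ} {E : Set (EuclideanSpace ℝ (Fin d))}
    {φ : EuclideanSpace ℝ (Fin d) → ℝ → EuclideanSpace ℝ (Fin d)}
    {tstar : EuclideanSpace ℝ (Fin d) → ℝ}
    {g : EuclideanSpace ℝ (Fin d) → ℝ} {Cg Lg1 Lg2 Lgs : ℝ} (hg : IsInL E φ tstar g Cg Lg1 Lg2 Lgs)
    {x : EuclideanSpace ℝ (Fin d)} (hx : x ∈ E) (hmem : ∀ u ∈ Ico 0 (tstar x), φ x u ∈ E)
    (hτ₀ : 0 < tstar x) {u : ℝ} (hu : u ∈ Icc 0 (tstar x)) : |g (φ x u)| ≤ Cg := by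
  rcases hu.2.lt_or_eq with hlt | rfl
  · exact hg.bdd _ (hmem u ⟨hu.1, hlt⟩)
  · exact le_of_tendsto (hg.lim x hx).abs <| mem_of_superset (Ioo_mem_nhdsLT hτ₀)
      fun r hr => hg.bdd _ (hmem r (Ioo_subset_Ico_self hr))

section Cost

variable {X : Type*} {φ : X → ℝ → X} {tstar : X → ℝ} {Lam : X → ℝ → ℝ} {α : ℝ}
  {f g k : X → ℝ} {F H I : X → ℝ → ℝ}

theorem min_exitTime_flow {x : X} {t : ℝ} (hτ : tstar (φ x t) = tstar x - t) (s : ℝ) :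
    min s (tstar (φ x t)) + t = min (t + s) (tstar x) := by
  rw [hτ, ← min_add_add_right]
  congr 1 <;> ring

theorem discountedCost_min_flow (hφ : ∀ x s t, φ x (t + s) = φ (φ x s) t) {x : X} {t s : ℝ}
    (hLam : ∀ u, Lam (φ x t) u = Lam x (u + t) - Lam x t) (hτ : tstar (φ x t) = tstar x - t)
    (ht : 0 ≤ t) (htx : t < tstar x) (hs : 0 ≤ s)
    (hg : ∀ b ∈ Icc 0 (tstar x), IntervalIntegrable (discountedIntegrand φ Lam α g x) volume 0 b) :
    discountedCost φ Lam α g (φ x t) (min s (tstar (φ x t))) =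
      Real.exp (α * t + Lam x t) * (discountedCost φ Lam α g x (min (t + s) (tstar x)) -
        discountedCost φ Lam α g x (min t (tstar x))) := by
  have hend : min s (tstar (φ x t)) + t ∈ Icc 0 (tstar x) := by
    rw [min_exitTime_flow hτ]
    exact ⟨le_min (by linarith) (ht.trans htx.le), min_le_right _ _⟩
  rw [discountedCost_flow hφ hLam (hg t ⟨ht, htx.le⟩) (hg _ hend), min_exitTime_flow hτ,
    min_eq_left htx.le]

theorem discount_min_flow (hφ : ∀ x s t, φ x (t + s) = φ (φ x s) t) {x : X} {t s : ℝ}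
    (hLam : ∀ u, Lam (φ x t) u = Lam x (u + t) - Lam x t) (hτ : tstar (φ x t) = tstar x - t) :
    Real.exp (-(α * min s (tstar (φ x t))) - Lam (φ x t) (min s (tstar (φ x t)))) *
        g (φ (φ x t) (min s (tstar (φ x t)))) =
      Real.exp (α * t + Lam x t) *
        (Real.exp (-(α * min (t + s) (tstar x)) - Lam x (min (t + s) (tstar x))) *
          g (φ x (min (t + s) (tstar x)))) := by
  rw [discount_flow (hLam _), ← hφ, min_exitTime_flow hτ, mul_assoc]

theorem cost_flow (hF : ∀ x t, F x t = discountedCost φ Lam α f x (min t (tstar x)))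
    (hH : ∀ x t, H x t = Real.exp (-(α * min t (tstar x)) - Lam x (min t (tstar x))) *
      g (φ x (min t (tstar x))))
    (hI : ∀ x t, I x t = discountedCost φ Lam α k x (min t (tstar x)))
    (hφ : ∀ x s t, φ x (t + s) = φ (φ x s) t) {x : X} {t s : ℝ}
    (hLam : ∀ u, Lam (φ x t) u = Lam x (u + t) - Lam x t) (hτ : tstar (φ x t) = tstar x - t)
    (ht : 0 ≤ t) (htx : t < tstar x) (hs : 0 ≤ s)
    (hf : ∀ b ∈ Icc 0 (tstar x), IntervalIntegrable (discountedIntegrand φ Lam α f x) volume 0 b)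
    (hk : ∀ b ∈ Icc 0 (tstar x), IntervalIntegrable (discountedIntegrand φ Lam α k x) volume 0 b) :
    F (φ x t) s + H (φ x t) s + I (φ x t) s = Real.exp (α * t + Lam x t) *
      (F x (t + s) + H x (t + s) + I x (t + s) - (F x t + I x t)) := by
  rw [hF, hH, hI, discountedCost_min_flow hφ hLam hτ ht htx hs hf,
    discountedCost_min_flow hφ hLam hτ ht htx hs hk, discount_min_flow hφ hLam hτ,
    hF, hF, hH, hI, hI]
  ring

theorem abs_cost_le (hF : ∀ x t, F x t = discountedCost φ Lam α f x (min t (tstar x)))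
    (hH : ∀ x t, H x t = Real.exp (-(α * min t (tstar x)) - Lam x (min t (tstar x))) *
      g (φ x (min t (tstar x))))
    (hI : ∀ x t, I x t = discountedCost φ Lam α k x (min t (tstar x))) (hα : 0 ≤ α) {x : X}
    (hLam_nonneg : ∀ u, 0 ≤ u → 0 ≤ Lam x u) (hτ₀ : 0 ≤ tstar x) {Cf Cg Ck : ℝ}
    (hf : ∀ u ∈ Icc 0 (tstar x), |f (φ x u)| ≤ Cf) (hg : ∀ u ∈ Icc 0 (tstar x), |g (φ x u)| ≤ Cg)
    (hk : ∀ u ∈ Icc 0 (tstar x), |k (φ x u)| ≤ Ck) {s : ℝ} (hs : 0 ≤ s) :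
    |F x s + H x s + I x s| ≤ Cf * tstar x + Cg + Ck * tstar x := by
  set m := min s (tstar x)
  have hm : m ∈ Icc 0 (tstar x) := ⟨le_min hs hτ₀, min_le_right _ _⟩
  have hmτ : ∀ {C : ℝ}, 0 ≤ C → C * m ≤ C * tstar x := fun hC => mul_le_mul_of_nonneg_left hm.2 hC
  have hIoc : Ioc 0 m ⊆ Icc 0 (tstar x) := fun u hu => ⟨hu.1.le, hu.2.trans hm.2⟩
  have hFm := abs_discountedCost_le hα hLam_nonneg hm.1 fun u hu => hf u (hIoc hu)
  have hIm := abs_discountedCost_le hα hLam_nonneg hm.1 fun u hu => hk u (hIoc hu)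
  have hHm := abs_discount_mul_le hα hm.1 (hLam_nonneg m hm.1) (hg m hm)
  have hCf : 0 ≤ Cf := (abs_nonneg _).trans (hf 0 ⟨le_rfl, hτ₀⟩)
  have hCk : 0 ≤ Ck := (abs_nonneg _).trans (hk 0 ⟨le_rfl, hτ₀⟩)
  rw [hF, hH, hI]
  calc _ ≤ |discountedCost φ Lam α f x m| + |Real.exp (-(α * m) - Lam x m) * g (φ x m)|
          + |discountedCost φ Lam α k x m| := abs_add_three _ _ _
    _ ≤ Cf * tstar x + Cg + Ck * tstar x := by
        linarith [hmτ hCf, hmτ hCk]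

end Cost

section Value

variable {X : Type*} {φ : X → ℝ → X} {tstar : X → ℝ} {Lam : X → ℝ → ℝ} {α : ℝ}
  {f k v q : X → ℝ} {F I J : X → ℝ → ℝ} {H : (X → ℝ) → X → ℝ → ℝ} {K L : X → ℝ}

theorem minCost_flow (hF : ∀ x t, F x t = discountedCost φ Lam α f x (min t (tstar x)))
    (hH : ∀ g x t, H g x t = Real.exp (-(α * min t (tstar x)) - Lam x (min t (tstar x))) *
      g (φ x (min t (tstar x))))
    (hI : ∀ x t, I x t = discountedCost φ Lam α k x (min t (tstar x)))
    (hJ : ∀ x s, J x s = F x s + H v x s + I x s)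
    (hK : ∀ x, K x = F x (tstar x) + H q x (tstar x) + I x (tstar x))
    (hL : ∀ x, L x = min (sInf (J x '' Ici 0)) (K x))
    (hφ : ∀ x s t, φ x (t + s) = φ (φ x s) t) (hα : 0 ≤ α) {x : X} {t : ℝ}
    (hLam : ∀ u, Lam (φ x t) u = Lam x (u + t) - Lam x t) (hLam_cont : Continuous (Lam x))
    (hLam_nonneg : ∀ u, 0 ≤ u → 0 ≤ Lam x u) (hτ : tstar (φ x t) = tstar x - t) (ht : 0 ≤ t)
    (htx : t < tstar x)
    (hf_meas : AEStronglyMeasurable (fun s => f (φ x s)) (volume.restrict (Ioo 0 (tstar x))))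
    (hk_meas : AEStronglyMeasurable (fun s => k (φ x s)) (volume.restrict (Ioo 0 (tstar x))))
    {Cf Cv Ck : ℝ} (hf_bdd : ∀ u ∈ Icc 0 (tstar x), |f (φ x u)| ≤ Cf)
    (hv_bdd : ∀ u ∈ Icc 0 (tstar x), |v (φ x u)| ≤ Cv)
    (hk_bdd : ∀ u ∈ Icc 0 (tstar x), |k (φ x u)| ≤ Ck) :
    L (φ x t) = Real.exp (α * t + Lam x t) * (min (sInf (J x '' Ici t)) (K x) - F x t - I x t) := by
  have hf := intervalIntegrable_discountedIntegrand hα hLam_cont hLam_nonneg hf_meas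
    fun u hu => hf_bdd u (Ioo_subset_Icc_self hu)
  have hk := intervalIntegrable_discountedIntegrand hα hLam_cont hLam_nonneg hk_meas
    fun u hu => hk_bdd u (Ioo_subset_Icc_self hu)
  have hJ_flow : ∀ s, 0 ≤ s → J (φ x t) s =
      Real.exp (α * t + Lam x t) * (J x (t + s) - (F x t + I x t)) := fun s hs => by
    simp only [hJ]
    exact cost_flow hF (hH v) hI hφ hLam hτ ht htx hs hf hk
  have hK_flow : K (φ x t) = Real.exp (α * t + Lam x t) * (K x - (F x t + I x t)) := by
    have hend : t + tstar (φ x t) = tstar x := by rw [hτ]; ring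
    rw [hK, hK, ← hend]
    exact cost_flow hF (hH q) hI hφ hLam hτ ht htx (hτ ▸ sub_nonneg.2 htx.le) hf hk
  -- Without this bound both infima could be the junk value `sInf = 0` of an unbounded set.
  have hbdd : BddBelow (J x '' Ici t) := by
    refine ⟨-(Cf * tstar x + Cv + Ck * tstar x), ?_⟩
    rintro _ ⟨s, hs, rfl⟩
    rw [hJ]
    exact neg_le_of_abs_le <| abs_cost_le hF (hH v) hI hα hLam_nonneg (ht.trans htx.le)
      hf_bdd hv_bdd hk_bdd (ht.trans hs)
  rw [hL, hK_flow, min_csInf_image_Ici_affine (Real.exp_pos _) hbdd hJ_flow, sub_sub]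

end Value

theorem stmt_15_general
    {d : ℕ}
    (E : Set (EuclideanSpace ℝ (Fin d)))
    (hE_open : IsOpen E)
    (φ : EuclideanSpace ℝ (Fin d) → ℝ → EuclideanSpace ℝ (Fin d))
    (hφ_cont : Continuous fun p : EuclideanSpace ℝ (Fin d) × ℝ => φ p.1 p.2)
    (hφ_homeo : ∀ t : ℝ, ∃ h : EuclideanSpace ℝ (Fin d) ≃ₜ EuclideanSpace ℝ (Fin d), ∀ x, h x = φ x t)
    (hφ_group : ∀ x s t, φ x (t + s) = φ (φ x s) t)
    (tstar : EuclideanSpace ℝ (Fin d) → ℝ)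
    (htstar_def : ∀ x ∈ E, tstar x = sInf {t : ℝ | 0 < t ∧ φ x t ∈ frontier E})
    (lam : EuclideanSpace ℝ (Fin d) → ℝ)
    (hlam_meas : Measurable lam)
    (hlam_nonneg : ∀ x, 0 ≤ lam x)
    (Clam : ℝ) (hlam_bdd : ∀ x, lam x ≤ Clam)
    (Lam : EuclideanSpace ℝ (Fin d) → ℝ → ℝ)
    (hLam_def : ∀ x t, Lam x t = ∫ s in (0:ℝ)..t, lam (φ x s))
    (α : ℝ) (hα_pos : 0 < α)
    (f : EuclideanSpace ℝ (Fin d) → ℝ) (Cf Lf1 Lf2 Lfs : ℝ)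
    (hf_L : IsInL E φ tstar f Cf Lf1 Lf2 Lfs)
    (F : EuclideanSpace ℝ (Fin d) → ℝ → ℝ)
    (hF_def : ∀ x t, F x t =
      ∫ s in (0:ℝ)..(min t (tstar x)), Real.exp (-(α * s) - Lam x s) * f (φ x s))
    (Q : ProbabilityTheory.Kernel (EuclideanSpace ℝ (Fin d)) (EuclideanSpace ℝ (Fin d)))
    (hQ_markov : ProbabilityTheory.IsMarkovKernel Q)
    (hQ_supp : ∀ x, Q x (E \ {x}) = 1)
    (Qop : (EuclideanSpace ℝ (Fin d) → ℝ) → EuclideanSpace ℝ (Fin d) → ℝ)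
    (hQop_def : ∀ (g : EuclideanSpace ℝ (Fin d) → ℝ) (x : EuclideanSpace ℝ (Fin d)), Qop g x = ∫ z, g z ∂(Q x))
    (LQ : ℝ)
    (hQ_lip1 : ∀ (g : EuclideanSpace ℝ (Fin d) → ℝ) (Cg Lg1 Lg2 Lgs : ℝ),
      IsInL E φ tstar g Cg Lg1 Lg2 Lgs →
      ∀ x ∈ E, ∀ y ∈ E, ∀ u ∈ Set.Icc (0:ℝ) (min (tstar x) (tstar y)),
        |Qop g (φ x u) - Qop g (φ y u)| ≤ LQ * Lg1 * ‖x - y‖)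
    (v : EuclideanSpace ℝ (Fin d) → ℝ) (Cv Lv1 Lv2 Lvs : ℝ)
    (hv_L : IsInL E φ tstar v Cv Lv1 Lv2 Lvs)
    (w : EuclideanSpace ℝ (Fin d) → ℝ) (Cw Lw1 Lw2 Lws : ℝ)
    (hw_L : IsInL E φ tstar w Cw Lw1 Lw2 Lws)
    (H : (EuclideanSpace ℝ (Fin d) → ℝ) → EuclideanSpace ℝ (Fin d) → ℝ → ℝ)
    (hH_def : ∀ (g : EuclideanSpace ℝ (Fin d) → ℝ) (x : EuclideanSpace ℝ (Fin d)) (t : ℝ), H g x t =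
      Real.exp (-(α * min t (tstar x)) - Lam x (min t (tstar x))) * g (φ x (min t (tstar x))))
    (Iop : (EuclideanSpace ℝ (Fin d) → ℝ) → EuclideanSpace ℝ (Fin d) → ℝ → ℝ)
    (hIop_def : ∀ (g : EuclideanSpace ℝ (Fin d) → ℝ) (x : EuclideanSpace ℝ (Fin d)) (t : ℝ), Iop g x t =
      ∫ s in (0:ℝ)..(min t (tstar x)),
        Real.exp (-(α * s) - Lam x s) * lam (φ x s) * Qop g (φ x s))
    (J : (EuclideanSpace ℝ (Fin d) → ℝ) → (EuclideanSpace ℝ (Fin d) → ℝ) → EuclideanSpace ℝ (Fin d) → ℝ → ℝ)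
    (hJ_def : ∀ (g₁ g₂ : EuclideanSpace ℝ (Fin d) → ℝ) (x : EuclideanSpace ℝ (Fin d)) (t : ℝ),
      J g₁ g₂ x t = F x t + H g₁ x t + Iop g₂ x t)
    (K : (EuclideanSpace ℝ (Fin d) → ℝ) → EuclideanSpace ℝ (Fin d) → ℝ)
    (hK_def : ∀ (g : EuclideanSpace ℝ (Fin d) → ℝ) (x : EuclideanSpace ℝ (Fin d)),
      K g x = F x (tstar x) + H (Qop g) x (tstar x) + Iop g x (tstar x))
    (Lop : (EuclideanSpace ℝ (Fin d) → ℝ) → (EuclideanSpace ℝ (Fin d) → ℝ) → EuclideanSpace ℝ (Fin d) → ℝ)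
    (hLop_def : ∀ (g₁ g₂ : EuclideanSpace ℝ (Fin d) → ℝ) (x : EuclideanSpace ℝ (Fin d)),
      Lop g₁ g₂ x = min (sInf ((fun t => J g₁ g₂ x t) '' Set.Ici (0:ℝ))) (K g₂ x))
    :
    ∀ x ∈ E, ∀ t : ℝ, 0 ≤ t → t < tstar x →
      Lop v w (φ x t) =
        Real.exp (α * t + Lam x t) *
          (min (sInf ((fun s => J v w x s) '' Set.Ici t)) (K w x) - F x t - Iop w x t) := by
  intro x hx t ht htx
  have hφ₀ : ∀ z, φ z 0 = z := by
    obtain ⟨h₀, hh₀⟩ := hφ_homeo 0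
    exact flow_zero (by simpa only [← hh₀] using h₀.injective) hφ_group
  have hφx : Continuous (φ x) := hφ_cont.comp (Continuous.prodMk_right x)
  have hmem : ∀ u ∈ Ico 0 (tstar x), φ x u ∈ E := fun u =>
    flow_mem_of_lt_exitTime hE_open htstar_def hx (hφ₀ x) hφx
  have hτ := exitTime_flow hE_open htstar_def hφ_group hx (hφ₀ x) hφx ht htx
  have hφ_Ioo : MapsTo (φ x) (Ioo 0 (tstar x)) E := fun u hu => hmem u (Ioo_subset_Ico_self hu)
  have hlam_abs : ∀ z, |lam z| ≤ Clam := fun z =>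
    (abs_of_nonneg (hlam_nonneg z)).trans_le (hlam_bdd z)
  have hlam : ∀ a b, IntervalIntegrable (fun s => lam (φ x s)) volume a b := fun a b =>
    intervalIntegrable_const.mono_fun' (hlam_meas.comp hφx.measurable).aestronglyMeasurable
      (ae_of_all _ fun s => hlam_abs _)
  have hQw_bdd : ∀ z, |Qop w z| ≤ Cw := fun z => hQop_def w z ▸
    abs_integral_le_of_measure_eq_one (hE_open.measurableSet.diff (measurableSet_singleton z))
      (hQ_supp z) fun _ hz => hw_L.bdd _ hz.1
  have hQw_cont : ContinuousOn (Qop w) E := continuousOn_of_abs_sub_le fun z hz z' hz' => by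
    simpa only [hφ₀] using hQ_lip1 w _ _ _ _ hw_L z hz z' hz' 0
      ⟨le_rfl, le_min (exitTime_nonneg htstar_def hz) (exitTime_nonneg htstar_def hz')⟩
  have hk_bdd : ∀ z, |lam z * Qop w z| ≤ Clam * Cw := fun z => (abs_mul _ _).trans_le <|
    mul_le_mul (hlam_abs z) (hQw_bdd z) (abs_nonneg _) ((abs_nonneg _).trans (hlam_abs z))
  have hI : ∀ x t, Iop w x t =
      discountedCost φ Lam α (fun z => lam z * Qop w z) x (min t (tstar x)) := fun x t => by
    simp only [hIop_def, mul_assoc]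
    rfl
  have hτ₀ : 0 < tstar x := ht.trans_lt htx
  exact minCost_flow hF_def hH_def hI (hJ_def v w) (hK_def w) (hLop_def v w) hφ_group hα_pos.le
    (Lam_flow hLam_def hφ_group hlam t) (continuous_Lam hLam_def hlam)
    (fun _ => Lam_nonneg hLam_def hlam_nonneg x) hτ ht htx
    (((hf_L.cont x hx).mono Ioo_subset_Ico_self).aestronglyMeasurable measurableSet_Ioo)
    ((hlam_meas.comp hφx.measurable).aestronglyMeasurable.mul
      ((hQw_cont.comp hφx.continuousOn hφ_Ioo).aestronglyMeasurable measurableSet_Ioo))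
    (fun u hu => hf_L.abs_le_of_mem_Icc hx hmem hτ₀ hu)
    (fun u hu => hv_L.abs_le_of_mem_Icc hx hmem hτ₀ hu)
    fun u _ => hk_bdd _

theorem stmt_15
    {d : ℕ}
    (E : Set (EuclideanSpace ℝ (Fin d)))
    (hE_open : IsOpen E)
    (φ : EuclideanSpace ℝ (Fin d) → ℝ → EuclideanSpace ℝ (Fin d))
    (hφ_cont : Continuous fun p : EuclideanSpace ℝ (Fin d) × ℝ => φ p.1 p.2)
    (hφ_homeo : ∀ t : ℝ, ∃ h : EuclideanSpace ℝ (Fin d) ≃ₜ EuclideanSpace ℝ (Fin d), ∀ x, h x = φ x t)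
    (hφ_group : ∀ x s t, φ x (t + s) = φ (φ x s) t)
    (tstar : EuclideanSpace ℝ (Fin d) → ℝ)
    (htstar_def : ∀ x ∈ E, tstar x = sInf {t : ℝ | 0 < t ∧ φ x t ∈ frontier E})
    (Ctstar : ℝ) (htstar_bdd : ∀ x ∈ E, tstar x ≤ Ctstar)
    (Ltstar : ℝ) (htstar_lip : ∀ x ∈ E, ∀ y ∈ E, |tstar x - tstar y| ≤ Ltstar * ‖x - y‖)
    (lam : EuclideanSpace ℝ (Fin d) → ℝ)
    (hlam_meas : Measurable lam)
    (hlam_nonneg : ∀ x, 0 ≤ lam x)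
    (Clam : ℝ) (hlam_bdd : ∀ x, lam x ≤ Clam)
    (Llam : ℝ)
    (hlam_lip : ∀ x ∈ E, ∀ y ∈ E, ∀ u : ℝ, 0 ≤ u → u < min (tstar x) (tstar y) →
      |lam (φ x u) - lam (φ y u)| ≤ Llam * ‖x - y‖)
    (Lam : EuclideanSpace ℝ (Fin d) → ℝ → ℝ)
    (hLam_def : ∀ x t, Lam x t = ∫ s in (0:ℝ)..t, lam (φ x s))
    (α : ℝ) (hα_pos : 0 < α)
    (f : EuclideanSpace ℝ (Fin d) → ℝ) (Cf Lf1 Lf2 Lfs : ℝ)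
    (hf_L : IsInL E φ tstar f Cf Lf1 Lf2 Lfs)
    (hf_pos : ∀ x ∈ E, 0 < f x)
    (F : EuclideanSpace ℝ (Fin d) → ℝ → ℝ)
    (hF_def : ∀ x t, F x t =
      ∫ s in (0:ℝ)..(min t (tstar x)), Real.exp (-(α * s) - Lam x s) * f (φ x s))
    (Q : ProbabilityTheory.Kernel (EuclideanSpace ℝ (Fin d)) (EuclideanSpace ℝ (Fin d)))
    (hQ_markov : ProbabilityTheory.IsMarkovKernel Q)
    (hQ_supp : ∀ x, Q x (E \ {x}) = 1)
    (Qop : (EuclideanSpace ℝ (Fin d) → ℝ) → EuclideanSpace ℝ (Fin d) → ℝ)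
    (hQop_def : ∀ (g : EuclideanSpace ℝ (Fin d) → ℝ) (x : EuclideanSpace ℝ (Fin d)), Qop g x = ∫ z, g z ∂(Q x))
    (LQ : ℝ)
    (hQ_lip1 : ∀ (g : EuclideanSpace ℝ (Fin d) → ℝ) (Cg Lg1 Lg2 Lgs : ℝ),
      IsInL E φ tstar g Cg Lg1 Lg2 Lgs →
      ∀ x ∈ E, ∀ y ∈ E, ∀ u ∈ Set.Icc (0:ℝ) (min (tstar x) (tstar y)),
        |Qop g (φ x u) - Qop g (φ y u)| ≤ LQ * Lg1 * ‖x - y‖)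
    (hQ_lipstar : ∀ (g : EuclideanSpace ℝ (Fin d) → ℝ) (Cg Lg1 Lg2 Lgs : ℝ),
      IsInL E φ tstar g Cg Lg1 Lg2 Lgs →
      ∀ x ∈ E, ∀ y ∈ E,
        |Qop g (φ x (tstar x)) - Qop g (φ y (tstar y))| ≤ LQ * Lgs * ‖x - y‖)
    (v : EuclideanSpace ℝ (Fin d) → ℝ) (Cv Lv1 Lv2 Lvs : ℝ)
    (hv_L : IsInL E φ tstar v Cv Lv1 Lv2 Lvs)
    (w : EuclideanSpace ℝ (Fin d) → ℝ) (Cw Lw1 Lw2 Lws : ℝ)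
    (hw_L : IsInL E φ tstar w Cw Lw1 Lw2 Lws)
    (H : (EuclideanSpace ℝ (Fin d) → ℝ) → EuclideanSpace ℝ (Fin d) → ℝ → ℝ)
    (hH_def : ∀ (g : EuclideanSpace ℝ (Fin d) → ℝ) (x : EuclideanSpace ℝ (Fin d)) (t : ℝ), H g x t =
      Real.exp (-(α * min t (tstar x)) - Lam x (min t (tstar x))) * g (φ x (min t (tstar x))))
    (Iop : (EuclideanSpace ℝ (Fin d) → ℝ) → EuclideanSpace ℝ (Fin d) → ℝ → ℝ)
    (hIop_def : ∀ (g : EuclideanSpace ℝ (Fin d) → ℝ) (x : EuclideanSpace ℝ (Fin d)) (t : ℝ), Iop g x t =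
      ∫ s in (0:ℝ)..(min t (tstar x)),
        Real.exp (-(α * s) - Lam x s) * lam (φ x s) * Qop g (φ x s))
    (J : (EuclideanSpace ℝ (Fin d) → ℝ) → (EuclideanSpace ℝ (Fin d) → ℝ) → EuclideanSpace ℝ (Fin d) → ℝ → ℝ)
    (hJ_def : ∀ (g₁ g₂ : EuclideanSpace ℝ (Fin d) → ℝ) (x : EuclideanSpace ℝ (Fin d)) (t : ℝ),
      J g₁ g₂ x t = F x t + H g₁ x t + Iop g₂ x t)
    (K : (EuclideanSpace ℝ (Fin d) → ℝ) → EuclideanSpace ℝ (Fin d) → ℝ)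
    (hK_def : ∀ (g : EuclideanSpace ℝ (Fin d) → ℝ) (x : EuclideanSpace ℝ (Fin d)),
      K g x = F x (tstar x) + H (Qop g) x (tstar x) + Iop g x (tstar x))
    (Lop : (EuclideanSpace ℝ (Fin d) → ℝ) → (EuclideanSpace ℝ (Fin d) → ℝ) → EuclideanSpace ℝ (Fin d) → ℝ)
    (hLop_def : ∀ (g₁ g₂ : EuclideanSpace ℝ (Fin d) → ℝ) (x : EuclideanSpace ℝ (Fin d)),
      Lop g₁ g₂ x = min (sInf ((fun t => J g₁ g₂ x t) '' Set.Ici (0:ℝ))) (K g₂ x))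
    :
    ∀ x ∈ E, ∀ t : ℝ, 0 ≤ t → t < tstar x →
      Lop v w (φ x t) =
        Real.exp (α * t + Lam x t) *
          (min (sInf ((fun s => J v w x s) '' Set.Ici t)) (K w x) - F x t - Iop w x t) :=
  stmt_15_general E hE_open φ hφ_cont hφ_homeo hφ_group tstar htstar_def lam hlam_meas hlam_nonneg
    Clam hlam_bdd Lam hLam_def α hα_pos f Cf Lf1 Lf2 Lfs hf_L F hF_def Q hQ_markov hQ_supp Qop
    hQop_def LQ hQ_lip1 v Cv Lv1 Lv2 Lvs hv_L w Cw Lw1 Lw2 Lws hw_L H hH_def Iop hIop_def J hJ_def K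
    hK_def Lop hLop_def
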